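/- arXiv:1905.04087 — 3 statements merged into one kernel-verified Lean document; each statement's English description precedes it below -/
import Mathlib

section
/- Let E be a strictly convex normed space whose norm is Fréchet differentiable away from 0, with a 1-suppression unconditional Schauder basis {eₙ}. Then for every w = Σ wⱼeⱼ ∈ E \ {0} and every index j₀, if w_{j₀} ≠ 0 then D‖·‖(w)(e_{j₀}) ≠ 0. -/
/-!
If `D` is the derivative of the norm at `w`, then `D ≤ ‖·‖` (the norm is 1-Lipschitz) and
`D w = ‖w‖` (the norm is positively homogeneous). Hence any `v` with `D v = ‖v‖` satisfies
`‖v + w‖ ≥ D (v + w) = ‖v‖ + ‖w‖`, which in a strictly convex space forces `v` onto the ray of `w`.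
If `D (e j₀) = 0`, then `v = w - w_{j₀} e_{j₀}` has `D v = ‖w‖ ≥ ‖v‖ ≥ D v` by suppression
unconditionality, so `v` is a positive multiple of `w`; but its `j₀`-th coordinate vanishes
while that of `w` does not.
-/

section NormDerivative

variable {E : Type*} [NormedAddCommGroup E] [NormedSpace ℝ E] {D : E →L[ℝ] ℝ} {w : E}

theorem HasFDerivAt.norm_apply_self (hD : HasFDerivAt (‖·‖) D w) : D w = ‖w‖ :=
  hD.fderiv ▸ hD.differentiableAt.fderiv_norm_self

theorem HasFDerivAt.norm_apply_le (hD : HasFDerivAt (‖·‖) D w) (x : E) : D x ≤ ‖x‖ :=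
  calc D x ≤ ‖D‖ * ‖x‖ := (le_abs_self _).trans (D.le_opNorm x)
    _ ≤ 1 * ‖x‖ := by
      gcongr
      simpa using hD.le_of_lipschitz lipschitzWith_one_norm
    _ = ‖x‖ := one_mul _

theorem HasFDerivAt.sameRay_of_norm_apply [StrictConvexSpace ℝ E]
    (hD : HasFDerivAt (‖·‖) D w) {v : E} (hv : D v = ‖v‖) : SameRay ℝ v w := by
  refine sameRay_iff_norm_add.mpr (le_antisymm (norm_add_le v w) ?_)
  calc ‖v‖ + ‖w‖ = D (v + w) := by rw [map_add, hv, hD.norm_apply_self]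
    _ ≤ ‖v + w‖ := hD.norm_apply_le _

end NormDerivative

theorem norm_deriv_nonzero_on_basis_vector_general
    (E : Type*) [NormedAddCommGroup E] [NormedSpace ℝ E] [StrictConvexSpace ℝ E]
    (e : ℕ → E) (c : ℕ → (E →L[ℝ] ℝ))
    (hbi : ∀ i j, c i (e j) = if i = j then 1 else 0)
    (hsupp : ∀ (x : E) (j₀ : ℕ), ‖x - c j₀ x • e j₀‖ ≤ ‖x‖)
    (w : E) (hw : w ≠ 0)
    (D : E →L[ℝ] ℝ) (hD : HasFDerivAt (fun z : E => ‖z‖) D w)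
    (j₀ : ℕ) (hj₀ : c j₀ w ≠ 0) :
    D (e j₀) ≠ 0 := by
  intro hDe
  set v := w - c j₀ w • e j₀
  have hDv : D v = ‖w‖ := by simp [v, hDe, hD.norm_apply_self]
  have hvw : ‖v‖ = ‖w‖ := le_antisymm (hsupp w j₀) (hDv ▸ hD.norm_apply_le v)
  have hv : v ≠ 0 := norm_ne_zero_iff.mp (hvw ▸ norm_ne_zero_iff.mpr hw)
  obtain ⟨r, -, hrv⟩ := (hD.sameRay_of_norm_apply (hDv.trans hvw.symm)).exists_pos_left hv hw
  have hcv : c j₀ v = 0 := by simp [v, hbi]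
  exact hj₀ (by rw [← hrv, map_smul, hcv, smul_zero])

/-- In a strictly convex space with a `1`-suppression unconditional Schauder
basis `e` (with biorthogonal coordinate functionals `c`), if the norm is
Fréchet differentiable at `w ≠ 0` and the `j₀`-th coordinate of `w` is nonzero,
then the derivative of the norm at `w` does not vanish on `e j₀`. -/
theorem norm_deriv_nonzero_on_basis_vector
    (E : Type*) [NormedAddCommGroup E] [NormedSpace ℝ E] [StrictConvexSpace ℝ E]
    (e : ℕ → E) (c : ℕ → (E →L[ℝ] ℝ))
    (hbi : ∀ i j, c i (e j) = if i = j then 1 else 0)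
    (hexp : ∀ x : E, HasSum (fun n => c n x • e n) x)
    (hsupp : ∀ (x : E) (j₀ : ℕ), ‖x - c j₀ x • e j₀‖ ≤ ‖x‖)
    (w : E) (hw : w ≠ 0)
    (D : E →L[ℝ] ℝ) (hD : HasFDerivAt (fun z : E => ‖z‖) D w)
    (j₀ : ℕ) (hj₀ : c j₀ w ≠ 0) :
    D (e j₀) ≠ 0 :=
  norm_deriv_nonzero_on_basis_vector_general E e c hbi hsupp w hw D hD j₀ hj₀
end

section
/- Let E, F be Banach spaces, U ⊆ E open, f: E → F a C¹ map, and g: U → F a C¹ map. Let δ: E → [0,∞) be a C¹ function with δ⁻¹(0) = E \ U. Suppose ‖g(x) − f(x)‖ ≤ δ(x) and ‖Dg(x) − Df(x)‖ ≤ δ(x) for all x ∈ U. Then the function G: E → F defined by G = g on U and G = f on E \ U is Fréchet differentiable at every point of the boundary ∂U, with DG(x) = Df(x) there. -/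
/-!
Off `U` the glued map agrees with `f`, and on `U` it differs from `f` by at most `δ`; hence
`‖G - f‖ ≤ δ` everywhere. At a boundary point `x` the function `δ` vanishes and dominates a
norm, so `x` is a local minimum of the differentiable function `δ` and `δ` vanishes to first
order there. Therefore `G - f` has derivative `0` at `x`, and `G = f + (G - f)` has derivative
`Df x`.
-/

open Filter Asymptotics Topology

section

variable {E F : Type*} [NormedAddCommGroup E] [NormedSpace ℝ E]
  [NormedAddCommGroup F] [NormedSpace ℝ F]

theorem hasFDerivAt_zero_of_norm_le {φ : E → F} {δ : E → ℝ} {x : E}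
    (hδ : DifferentiableAt ℝ δ x) (hδx : δ x = 0) (hle : ∀ᶠ y in 𝓝 x, ‖φ y‖ ≤ δ y) :
    HasFDerivAt φ (0 : E →L[ℝ] F) x := by
  have hmin : IsLocalMin δ x := hle.mono fun y hy => hδx ▸ (norm_nonneg _).trans hy
  have hδ' : HasFDerivAt δ (0 : E →L[ℝ] ℝ) x := hmin.fderiv_eq_zero ▸ hδ.hasFDerivAt
  have hφx : φ x = 0 := norm_le_zero_iff.mp (hδx ▸ hle.self_of_nhds)
  refine .of_isLittleO <| IsBigO.trans_isLittleO ?_ hδ'.isLittleO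
  refine IsBigO.of_bound 1 (hle.mono fun y hy => ?_)
  simpa [hφx, hδx] using hy.trans (le_abs_self _)

end

theorem glued_map_differentiable_at_boundary_general
    (E F : Type*) [NormedAddCommGroup E] [NormedSpace ℝ E]
    [NormedAddCommGroup F] [NormedSpace ℝ F]
    (U : Set E) (hU : IsOpen U)
    (f : E → F) (Df : E → (E →L[ℝ] F)) (hf : ∀ x, HasFDerivAt f (Df x) x)
    (g : E → F)
    (δ : E → ℝ) (hδ : ContDiff ℝ 1 δ)
    (hδU : ∀ x, δ x = 0 ↔ x ∉ U)
    (happrox : ∀ x ∈ U, ‖g x - f x‖ ≤ δ x)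
    (G : E → F) (hG : ∀ x ∈ U, G x = g x) (hG' : ∀ x ∉ U, G x = f x) :
    ∀ x ∈ frontier U, HasFDerivAt G (Df x) x := by
  intro x hx
  have hxU : x ∉ U := (hU.frontier_eq ▸ hx).2
  have hle : ∀ y, ‖G y - f y‖ ≤ δ y := by
    intro y
    by_cases hy : y ∈ U
    · exact hG y hy ▸ happrox y hy
    · rw [hG' y hy, sub_self, norm_zero, (hδU y).2 hy]
  have hGf : HasFDerivAt (fun y => G y - f y) (0 : E →L[ℝ] F) x :=
    hasFDerivAt_zero_of_norm_le (hδ.differentiable one_ne_zero x) ((hδU x).2 hxU) (.of_forall hle)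
  convert (hf x).add hGf using 1
  · exact funext fun y => (add_sub_cancel (f y) (G y)).symm
  · rw [add_zero]

/-- Gluing with first-order contact: if `g` is a `C¹` approximation of `f` on an
open set `U` to within a `C¹` tolerance `δ ≥ 0` whose zero set is exactly
`E \ U` (both in values and in derivatives), then the glued map `G` (equal to
`g` on `U` and to `f` off `U`) is Fréchet differentiable at every boundary
point of `U`, with derivative `Df(x)`. -/
theorem glued_map_differentiable_at_boundary
    (E F : Type*) [NormedAddCommGroup E] [NormedSpace ℝ E] [CompleteSpace E]
    [NormedAddCommGroup F] [NormedSpace ℝ F] [CompleteSpace F]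
    (U : Set E) (hU : IsOpen U)
    (f : E → F) (Df : E → (E →L[ℝ] F)) (hf : ∀ x, HasFDerivAt f (Df x) x)
    (g : E → F) (Dg : E → (E →L[ℝ] F)) (hg : ∀ x ∈ U, HasFDerivAt g (Dg x) x)
    (δ : E → ℝ) (hδ : ContDiff ℝ 1 δ) (hδ0 : ∀ x, 0 ≤ δ x)
    (hδU : ∀ x, δ x = 0 ↔ x ∉ U)
    (happrox : ∀ x ∈ U, ‖g x - f x‖ ≤ δ x)
    (happrox' : ∀ x ∈ U, ‖Dg x - Df x‖ ≤ δ x)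
    (G : E → F) (hG : ∀ x ∈ U, G x = g x) (hG' : ∀ x ∉ U, G x = f x) :
    ∀ x ∈ frontier U, HasFDerivAt G (Df x) x :=
  glued_map_differentiable_at_boundary_general E F U hU f Df hf g δ hδ hδU happrox G hG hG'
end

section
/- In the setting of the previous gluing: with the same hypotheses (G = g on U, G = f off U, ‖g − f‖ ≤ δ and ‖Dg − Df‖ ≤ δ on U, δ C¹ with δ⁻¹(0) = E \ U), the glued map G is C¹ on all of E, i.e. x ↦ DG(x) is continuous. -/
/-!
Inside `U` the glued map agrees with `g` near every point, so only points `x ∉ U` need care. There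
`δ` attains its minimum `0`, hence `Dδ(x) = 0` and `‖G - f‖ ≤ δ = o(‖y - x‖)`, so `G` is
differentiable at `x` with `DG(x) = Df(x)`. The same reasoning gives `‖DG - Df‖ ≤ δ` everywhere,
and since `δ(y) → 0` and `Df(y) → Df(x)` as `y → x`, also `DG(y) → Df(x) = DG(x)`.
-/

open Filter Asymptotics Topology

theorem hasFDerivAt_zero_of_eventually_norm_le {E F : Type*} [NormedAddCommGroup E]
    [NormedSpace ℝ E] [NormedAddCommGroup F] [NormedSpace ℝ F] {h : E → F} {δ : E → ℝ} {x : E}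
    (hδ : DifferentiableAt ℝ δ x) (hδx : δ x = 0) (hle : ∀ᶠ y in 𝓝 x, ‖h y‖ ≤ δ y) :
    HasFDerivAt h (0 : E →L[ℝ] F) x := by
  have hmin : IsLocalMin δ x := hle.mono fun y hy => hδx ▸ (norm_nonneg _).trans hy
  have hδo : δ =o[𝓝 x] fun y => y - x := by
    simpa [hmin.fderiv_eq_zero, hδx] using hδ.hasFDerivAt.isLittleO
  have hhO : h =O[𝓝 x] δ :=
    IsBigO.of_bound' <| hle.mono fun y hy => hy.trans (Real.le_norm_self _)
  have hhx : h x = 0 := norm_le_zero_iff.mp (hδx ▸ hle.self_of_nhds)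
  exact .of_isLittleO <| by simpa [hhx] using hhO.trans_isLittleO hδo

theorem HasFDerivAt.of_eventually_norm_sub_le {E F : Type*} [NormedAddCommGroup E]
    [NormedSpace ℝ E] [NormedAddCommGroup F] [NormedSpace ℝ F] {f G : E → F} {f' : E →L[ℝ] F}
    {δ : E → ℝ} {x : E} (hf : HasFDerivAt f f' x) (hδ : DifferentiableAt ℝ δ x) (hδx : δ x = 0)
    (hle : ∀ᶠ y in 𝓝 x, ‖G y - f y‖ ≤ δ y) : HasFDerivAt G f' x := by
  simpa [Pi.add_def] using hf.add (hasFDerivAt_zero_of_eventually_norm_le hδ hδx hle)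

theorem Filter.Tendsto.of_eventually_norm_sub_le {α E : Type*} [SeminormedAddCommGroup E]
    {l : Filter α} {u v : α → E} {δ : α → ℝ} {a : E} (hu : Tendsto u l (𝓝 a))
    (hle : ∀ᶠ y in l, ‖v y - u y‖ ≤ δ y) (hδ : Tendsto δ l (𝓝 0)) : Tendsto v l (𝓝 a) := by
  have hvu : Tendsto (fun y => v y - u y) l (𝓝 0) :=
    tendsto_zero_iff_norm_tendsto_zero.mpr <|
      squeeze_zero' (.of_forall fun _ => norm_nonneg _) hle hδ
  simpa using hu.add hvu

theorem glued_map_contDiff_general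
    (E F : Type*) [NormedAddCommGroup E] [NormedSpace ℝ E]
    [NormedAddCommGroup F] [NormedSpace ℝ F]
    (U : Set E) (hU : IsOpen U)
    (f : E → F) (hf : ContDiff ℝ 1 f)
    (g : E → F) (hg : ContDiffOn ℝ 1 g U)
    (δ : E → ℝ) (hδ : ContDiff ℝ 1 δ) (hδ0 : ∀ x, 0 ≤ δ x)
    (hδU : ∀ x, δ x = 0 ↔ x ∉ U)
    (happrox : ∀ x ∈ U, ‖g x - f x‖ ≤ δ x)
    (happrox' : ∀ x ∈ U, ‖fderiv ℝ g x - fderiv ℝ f x‖ ≤ δ x)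
    (G : E → F) (hG : ∀ x ∈ U, G x = g x) (hG' : ∀ x ∉ U, G x = f x) :
    ContDiff ℝ 1 G := by
  obtain ⟨hf_diff, hf'_cont⟩ := contDiff_one_iff_fderiv.mp hf
  have hGg : ∀ x ∈ U, G =ᶠ[𝓝 x] g := fun x hx => eventuallyEq_of_mem (hU.mem_nhds hx) hG
  have hGf : ∀ y, ‖G y - f y‖ ≤ δ y := fun y => by
    by_cases hy : y ∈ U
    · exact hG y hy ▸ happrox y hy
    · simpa [hG' y hy] using hδ0 y
  have hderiv_out : ∀ x ∉ U, HasFDerivAt G (fderiv ℝ f x) x := fun x hx =>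
    (hf_diff x).hasFDerivAt.of_eventually_norm_sub_le (hδ.differentiable one_ne_zero x)
      ((hδU x).mpr hx) (.of_forall hGf)
  have hG_diff : Differentiable ℝ G := fun x => by
    by_cases hx : x ∈ U
    · exact ((hg.differentiableOn one_ne_zero x hx).differentiableAt
        (hU.mem_nhds hx)).congr_of_eventuallyEq (hGg x hx)
    · exact (hderiv_out x hx).differentiableAt
  have hG'f' : ∀ y, ‖fderiv ℝ G y - fderiv ℝ f y‖ ≤ δ y := fun y => by
    by_cases hy : y ∈ U
    · exact (hGg y hy).fderiv_eq (𝕜 := ℝ) ▸ happrox' y hy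
    · simpa [(hderiv_out y hy).fderiv] using hδ0 y
  refine contDiff_one_iff_fderiv.mpr ⟨hG_diff, continuous_iff_continuousAt.mpr fun x => ?_⟩
  by_cases hx : x ∈ U
  · exact ((hg.continuousOn_fderiv_of_isOpen hU le_rfl).continuousAt
      (hU.mem_nhds hx)).congr ((hGg x hx).fderiv (𝕜 := ℝ)).symm
  · have hδ_tendsto : Tendsto δ (𝓝 x) (𝓝 0) := (hδU x).mpr hx ▸ hδ.continuous.tendsto x
    rw [ContinuousAt, (hderiv_out x hx).fderiv]
    exact hf'_cont.continuousAt.of_eventually_norm_sub_le (.of_forall hG'f') hδ_tendsto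

/-- Gluing with first-order contact, `C¹` version: with `f` of class `C¹` on
`E`, `g` of class `C¹` on the open set `U`, `δ` of class `C¹`, nonnegative,
with zero set exactly `E \ U`, and `‖g − f‖ ≤ δ`, `‖Dg − Df‖ ≤ δ` on `U`, the
glued map `G` (equal to `g` on `U`, to `f` off `U`) is `C¹` on all of `E`. -/
theorem glued_map_contDiff
    (E F : Type*) [NormedAddCommGroup E] [NormedSpace ℝ E] [CompleteSpace E]
    [NormedAddCommGroup F] [NormedSpace ℝ F] [CompleteSpace F]
    (U : Set E) (hU : IsOpen U)
    (f : E → F) (hf : ContDiff ℝ 1 f)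
    (g : E → F) (hg : ContDiffOn ℝ 1 g U)
    (δ : E → ℝ) (hδ : ContDiff ℝ 1 δ) (hδ0 : ∀ x, 0 ≤ δ x)
    (hδU : ∀ x, δ x = 0 ↔ x ∉ U)
    (happrox : ∀ x ∈ U, ‖g x - f x‖ ≤ δ x)
    (happrox' : ∀ x ∈ U, ‖fderiv ℝ g x - fderiv ℝ f x‖ ≤ δ x)
    (G : E → F) (hG : ∀ x ∈ U, G x = g x) (hG' : ∀ x ∉ U, G x = f x) :
    ContDiff ℝ 1 G :=
  glued_map_contDiff_general E F U hU f hf g hg δ hδ hδ0 hδU happrox happrox' G hG hG'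
end
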